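/- For every S ⊆ B, −⟨ψ| 1_S H 1_{B∖S} |ψ⟩ ≤ (‖H‖ − E₀)·π(∂S), i.e. ∑_{x∈S, y∈B∖S} conj(ψ_x) (‖H‖·δ_{xy} − H_{xy}) ψ_y ≤ (‖H‖ − E₀)·π(∂S). -/

import Mathlib

open scoped BigOperators ComplexOrder

/-- The ℓ²-operator norm of a matrix over ℂ. -/
noncomputable def opNorm {B : Type*} [Fintype B] [DecidableEq B] (H : Matrix B B ℂ) : ℝ :=
  ‖Matrix.toEuclideanCLM (𝕜 := ℂ) H‖

/-- The ground-state probability measure of a subset `S`. -/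
noncomputable def piS {B : Type*} (ψ : B → ℂ) (S : Finset B) : ℝ :=
  ∑ z ∈ S, ‖ψ z‖ ^ 2

open scoped Classical in
/-- The interior boundary `∂S` of the set `S` with respect to the matrix `H`. -/
noncomputable def bdry {B : Type*} [Fintype B] (H : Matrix B B ℂ) (S : Finset B) : Finset B :=
  S.filter (fun x => ∃ y ∉ S, H x y ≠ 0)

/-!
The `δ_{xy}` term vanishes on `S × (B∖S)`, so the left side is `-Re ⟨f, H g⟩` with `f = 1_S ψ`,
`g = 1_{B∖S} ψ`. Since `H` only couples `B∖S` to `S` through `∂S`, `⟨f, H g⟩ = ⟨v, H g⟩` for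
`v = 1_{∂S} ψ`. Apply the lower bound `H ≥ E₀` to the trial vector `v + g`: the cross terms give
`2 Re ⟨f, H g⟩`, and the eigenvalue equation tested against `g` gives
`Re ⟨g, H g⟩ = E₀ ‖g‖² - Re ⟨f, H g⟩`. What remains is
`-Re ⟨f, H g⟩ ≤ Re ⟨v, H v⟩ - E₀ ‖v‖² ≤ (‖H‖ - E₀) ‖v‖² = (‖H‖ - E₀) π(∂S)`.
-/

open scoped InnerProductSpace ComplexConjugate
open RCLike WithLp

section InnerProductSpace

variable {𝕜 E : Type*} [RCLike 𝕜] [NormedAddCommGroup E] [InnerProductSpace 𝕜 E]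

theorem LinearMap.IsSymmetric.neg_re_inner_le_of_ground_state {T : E →ₗ[𝕜] E}
    (hT : T.IsSymmetric) {E₀ : ℝ} (hE₀ : ∀ u, E₀ * ‖u‖ ^ 2 ≤ re ⟪u, T u⟫_𝕜) {f g v : E}
    (hψ : T (f + g) = (E₀ : 𝕜) • (f + g)) (hgf : ⟪g, f⟫_𝕜 = 0) (hvg : ⟪v, g⟫_𝕜 = 0)
    (hv : ⟪v, T g⟫_𝕜 = ⟪f, T g⟫_𝕜) :
    -re ⟪f, T g⟫_𝕜 ≤ re ⟪v, T v⟫_𝕜 - E₀ * ‖v‖ ^ 2 := by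
  have hgg : re ⟪g, T g⟫_𝕜 = E₀ * ‖g‖ ^ 2 - re ⟪f, T g⟫_𝕜 := by
    have h := congrArg re (congrArg (⟪g, ·⟫_𝕜) hψ)
    simp only [map_add, inner_add_right, inner_smul_right, hgf, zero_add, re_ofReal_mul,
      inner_self_eq_norm_sq, ← hT g f, inner_re_symm (T g) f] at h
    linarith
  have hgv : re ⟪g, T v⟫_𝕜 = re ⟪f, T g⟫_𝕜 := by
    rw [← hT, inner_re_symm, hv]
  have hpyth : ‖v + g‖ ^ 2 = ‖v‖ ^ 2 + ‖g‖ ^ 2 := by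
    simpa only [sq] using norm_add_sq_eq_norm_sq_add_norm_sq_of_inner_eq_zero v g hvg
  have hvg_trial := hE₀ (v + g)
  simp only [hpyth, map_add, inner_add_left, inner_add_right, hv, hgg, hgv] at hvg_trial
  linarith

theorem ContinuousLinearMap.re_inner_apply_self_le (T : E →L[𝕜] E) (v : E) :
    re ⟪v, T v⟫_𝕜 ≤ ‖T‖ * ‖v‖ ^ 2 :=
  calc re ⟪v, T v⟫_𝕜 ≤ ‖v‖ * ‖T v‖ := re_inner_le_norm v (T v)
    _ ≤ ‖v‖ * (‖T‖ * ‖v‖) := by gcongr; exact T.le_opNorm v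
    _ = ‖T‖ * ‖v‖ ^ 2 := by ring

theorem ContinuousLinearMap.neg_re_inner_le_of_ground_state {T : E →L[𝕜] E}
    (hT : (T : E →ₗ[𝕜] E).IsSymmetric) {E₀ : ℝ} (hE₀ : ∀ u, E₀ * ‖u‖ ^ 2 ≤ re ⟪u, T u⟫_𝕜)
    {f g v : E} (hψ : T (f + g) = (E₀ : 𝕜) • (f + g)) (hgf : ⟪g, f⟫_𝕜 = 0)
    (hvg : ⟪v, g⟫_𝕜 = 0) (hv : ⟪v, T g⟫_𝕜 = ⟪f, T g⟫_𝕜) :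
    -re ⟪f, T g⟫_𝕜 ≤ (‖T‖ - E₀) * ‖v‖ ^ 2 := by
  have h := hT.neg_re_inner_le_of_ground_state hE₀ hψ hgf hvg hv
  have hTv := T.re_inner_apply_self_le v
  simp only [ContinuousLinearMap.coe_coe] at h
  linarith

end InnerProductSpace

namespace Matrix

variable {𝕜 B : Type*} [RCLike 𝕜] [Fintype B] [DecidableEq B]

theorem IsHermitian.posSemidef_sub_smul_one {H : Matrix B B 𝕜} (hH : H.IsHermitian) {E₀ : ℝ}
    (hE₀ : ∀ i, E₀ ≤ hH.eigenvalues i) : (H - (E₀ : 𝕜) • 1).PosSemidef := by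
  refine posSemidef_iff_isHermitian_and_spectrum_nonneg.mpr
    ⟨hH.sub (isHermitian_one.smul (conj_ofReal E₀)), ?_⟩
  rw [← Algebra.algebraMap_eq_smul_one, ← spectrum.sub_singleton_eq, hH.spectrum_eq_image_range]
  rintro _ ⟨_, ⟨_, ⟨i, rfl⟩, rfl⟩, _, rfl, rfl⟩
  change (0 : 𝕜) ≤ (hH.eigenvalues i : 𝕜) - (E₀ : 𝕜)
  rw [← ofReal_sub, ofReal_nonneg, sub_nonneg]
  exact hE₀ i

theorem IsHermitian.mul_norm_sq_le_re_inner {H : Matrix B B 𝕜} (hH : H.IsHermitian) {E₀ : ℝ}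
    (hE₀ : ∀ i, E₀ ≤ hH.eigenvalues i) (u : EuclideanSpace 𝕜 B) :
    E₀ * ‖u‖ ^ 2 ≤ re ⟪u, toEuclideanCLM (𝕜 := 𝕜) H u⟫_𝕜 := by
  have hpos := (isPositive_toEuclideanLin_iff.mpr
    (hH.posSemidef_sub_smul_one hE₀)).re_inner_nonneg_right u
  rw [map_sub, LinearMap.sub_apply, map_smul, LinearMap.smul_apply, toLpLin_one,
    LinearMap.id_apply, inner_sub_right, inner_smul_right, map_sub, re_ofReal_mul,
    inner_self_eq_norm_sq] at hpos
  exact sub_nonneg.mp hpos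

end Matrix

section IndicatorVec

variable {𝕜 B : Type*} [RCLike 𝕜] [Fintype B]

/-- The vector `1_S a` of the paper. -/
noncomputable def indicatorVec (S : Finset B) (a : B → 𝕜) : EuclideanSpace 𝕜 B :=
  toLp 2 ((S : Set B).indicator a)

theorem indicatorVec_add_compl [DecidableEq B] (S : Finset B) (a : B → 𝕜) :
    indicatorVec S a + indicatorVec Sᶜ a = toLp 2 a := by
  rw [indicatorVec, indicatorVec, ← toLp_add, Finset.coe_compl, Set.indicator_self_add_compl]

theorem inner_indicatorVec_of_disjoint {S T : Finset B} (h : Disjoint S T) (a b : B → 𝕜) :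
    ⟪indicatorVec S a, indicatorVec T b⟫_𝕜 = 0 := by
  refine Finset.sum_eq_zero fun x _ => ?_
  by_cases hx : x ∈ S
  · simp [indicatorVec, Finset.disjoint_left.mp h hx]
  · simp [indicatorVec, hx]

theorem norm_indicatorVec_sq (S : Finset B) (a : B → 𝕜) :
    ‖indicatorVec S a‖ ^ 2 = ∑ z ∈ S, ‖a z‖ ^ 2 := by
  classical
  simp [indicatorVec, EuclideanSpace.norm_sq_eq, Set.indicator_apply, apply_ite,
    Finset.sum_ite_mem]

theorem inner_indicatorVec_toEuclideanCLM [DecidableEq B] (H : Matrix B B 𝕜) (S T : Finset B)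
    (a b : B → 𝕜) :
    ⟪indicatorVec S a, Matrix.toEuclideanCLM (𝕜 := 𝕜) H (indicatorVec T b)⟫_𝕜
      = ∑ x ∈ S, ∑ y ∈ T, conj (a x) * H x y * b y := by
  simp only [indicatorVec, Matrix.toEuclideanCLM_toLp, EuclideanSpace.inner_toLp_toLp,
    dotProduct, Matrix.mulVec, Pi.star_apply, Set.indicator_apply, Finset.mem_coe, apply_ite,
    star_zero, mul_zero, Finset.sum_mul, Finset.sum_ite_mem, Finset.univ_inter]
  exact Finset.sum_congr rfl fun x _ => Finset.sum_congr rfl fun y _ => by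
    rw [RCLike.star_def]
    ring

end IndicatorVec

section Boundary

variable {B : Type*} [Fintype B] {H : Matrix B B ℂ} {S : Finset B}

theorem mem_bdry {x : B} : x ∈ bdry H S ↔ x ∈ S ∧ ∃ y ∉ S, H x y ≠ 0 := by
  classical
  exact Finset.mem_filter

theorem bdry_subset : bdry H S ⊆ S := fun _ hx => (mem_bdry.mp hx).1

theorem apply_eq_zero_of_notMem_bdry {x y : B} (hx : x ∈ S) (hxb : x ∉ bdry H S) (hy : y ∉ S) :
    H x y = 0 := by
  by_contra hxy
  exact hxb (mem_bdry.mpr ⟨hx, y, hy, hxy⟩)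

theorem sum_bdry_sum_compl [DecidableEq B] (a b : B → ℂ) :
    ∑ x ∈ bdry H S, ∑ y ∈ Sᶜ, conj (a x) * H x y * b y
      = ∑ x ∈ S, ∑ y ∈ Sᶜ, conj (a x) * H x y * b y :=
  Finset.sum_subset bdry_subset fun _ hx hxb =>
    Finset.sum_eq_zero fun _ hy => by
      rw [apply_eq_zero_of_notMem_bdry hx hxb (Finset.mem_compl.mp hy), mul_zero, zero_mul]

end Boundary

theorem stmt_6_general {B : Type*} [Fintype B] [DecidableEq B]
    (H : Matrix B B ℂ) (hH : H.IsHermitian)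
    -- `ψ` is a unit-norm eigenvector for the smallest eigenvalue `E₀`:
    (E₀ : ℝ) (ψ : B → ℂ)
    (hground : H.mulVec ψ = (E₀ : ℂ) • ψ)
    (hleast : ∀ i, E₀ ≤ hH.eigenvalues i)
    (S : Finset B) :
    (∑ x ∈ S, ∑ y ∈ Sᶜ,
        (starRingEnd ℂ) (ψ x) * ((opNorm H : ℂ) * (if x = y then 1 else 0) - H x y) * ψ y).re ≤
      (opNorm H - E₀) * piS ψ (bdry H S) := by
  rw [opNorm, piS, ← norm_indicatorVec_sq]
  set T := Matrix.toEuclideanCLM (𝕜 := ℂ) H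
  have hcut : (∑ x ∈ S, ∑ y ∈ Sᶜ,
      (starRingEnd ℂ) (ψ x) * ((‖T‖ : ℂ) * (if x = y then 1 else 0) - H x y) * ψ y)
        = -⟪indicatorVec S ψ, T (indicatorVec Sᶜ ψ)⟫_ℂ := by
    rw [inner_indicatorVec_toEuclideanCLM, ← Finset.sum_neg_distrib]
    refine Finset.sum_congr rfl fun x hx => ?_
    rw [← Finset.sum_neg_distrib]
    refine Finset.sum_congr rfl fun y hy => ?_
    rw [if_neg (ne_of_mem_of_not_mem hx (Finset.mem_compl.mp hy))]
    ring
  have hbdry : ⟪indicatorVec (bdry H S) ψ, T (indicatorVec Sᶜ ψ)⟫_ℂ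
      = ⟪indicatorVec S ψ, T (indicatorVec Sᶜ ψ)⟫_ℂ := by
    rw [inner_indicatorVec_toEuclideanCLM, inner_indicatorVec_toEuclideanCLM, sum_bdry_sum_compl]
  have hψ : T (indicatorVec S ψ + indicatorVec Sᶜ ψ)
      = (E₀ : ℂ) • (indicatorVec S ψ + indicatorVec Sᶜ ψ) := by
    rw [indicatorVec_add_compl, Matrix.toEuclideanCLM_toLp, hground, toLp_smul]
  have hT : (T : EuclideanSpace ℂ B →ₗ[ℂ] EuclideanSpace ℂ B).IsSymmetric := by
    rw [Matrix.coe_toEuclideanCLM_eq_toEuclideanLin, Matrix.isSymmetric_toEuclideanLin_iff]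
    exact hH
  rw [hcut, Complex.neg_re, ← RCLike.re_to_complex]
  exact T.neg_re_inner_le_of_ground_state hT (hH.mul_norm_sq_le_re_inner hleast) hψ
    (inner_indicatorVec_of_disjoint disjoint_compl_left ψ ψ)
    (inner_indicatorVec_of_disjoint (disjoint_compl_right.mono_left bdry_subset) ψ ψ)
    hbdry

/-- Inequality (14) of the paper:
`∑_{x∈S, y∈B∖S} conj(ψ_x)(‖H‖δ_{xy} - H_{xy})ψ_y ≤ (‖H‖ - E₀)·π(∂S)`. -/
theorem stmt_6 {B : Type*} [Fintype B] [DecidableEq B]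
    (H : Matrix B B ℂ) (hH : H.IsHermitian)
    -- `ψ` is a unit-norm eigenvector for the smallest eigenvalue `E₀`:
    (E₀ : ℝ) (ψ : B → ℂ) (hψnorm : ∑ z, ‖ψ z‖ ^ 2 = 1)
    (hground : H.mulVec ψ = (E₀ : ℂ) • ψ)
    (hleast : ∀ i, E₀ ≤ hH.eigenvalues i)
    (S : Finset B) :
    (∑ x ∈ S, ∑ y ∈ Sᶜ,
        (starRingEnd ℂ) (ψ x) * ((opNorm H : ℂ) * (if x = y then 1 else 0) - H x y) * ψ y).re ≤
      (opNorm H - E₀) * piS ψ (bdry H S) :=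
  stmt_6_general H hH E₀ ψ hground hleast S
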